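/- arXiv:0711.3399 — 3 statements merged into one kernel-verified Lean document; each statement's English description precedes it below -/
import Mathlib

section
/- Let Ω ⊆ ℝⁿ be a bounded John domain with John constants δ, K and John curves γ(·,y), and let φ ∈ C₀^∞ with supp φ ⊆ B(0, δ/2). Define G(x,y) = −∫₀¹ ( γ̇(s,y) + (x − γ(s,y))/s ) φ((x − γ(s,y))/s) s^{−n} ds. Then there exists a constant C = C(n, δ, K) such that |G(x,y)| ≤ C ‖φ‖_∞ / |x − y|^{n−1} for all x, y ∈ Ω. -/
open MeasureTheory Metric Set Topology Filter

noncomputable section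

/-- The kernel `G(x,y)` from the representation formula. -/
def johnKernel {n : ℕ} (γ γ' : EuclideanSpace ℝ (Fin n) → ℝ → EuclideanSpace ℝ (Fin n))
    (φ : EuclideanSpace ℝ (Fin n) → ℝ) (x y : EuclideanSpace ℝ (Fin n)) :
    EuclideanSpace ℝ (Fin n) :=
  -∫ s in (0:ℝ)..1,
    ((s ^ n)⁻¹ * φ (s⁻¹ • (x - γ y s))) • (γ' y s + s⁻¹ • (x - γ y s))

set_option maxHeartbeats 1000000 in
/-- Kernel bound: there is `C = C(n, δ, K)` with
`|G(x,y)| ≤ C ‖φ‖_∞ / |x-y|^{n-1}` for all `x, y ∈ Ω`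
(stated in the equivalent multiplied form `|G(x,y)| |x-y|^{n-1} ≤ C ‖φ‖_∞`). -/
theorem kernel_bound {n : ℕ} (hn : 1 ≤ n)
    (Ω : Set (EuclideanSpace ℝ (Fin n))) (hΩo : IsOpen Ω)
    (hΩb : Bornology.IsBounded Ω) (h0 : (0 : EuclideanSpace ℝ (Fin n)) ∈ Ω)
    (δ K : ℝ) (hδ : 0 < δ) (hK : 0 < K)
    (γ γ' : EuclideanSpace ℝ (Fin n) → ℝ → EuclideanSpace ℝ (Fin n))
    (hγ0 : ∀ y ∈ Ω, γ y 0 = y) (hγ1 : ∀ y ∈ Ω, γ y 1 = 0)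
    (hγΩ : ∀ y ∈ Ω, ∀ s ∈ Icc (0:ℝ) 1, γ y s ∈ Ω)
    (hγd : ∀ y ∈ Ω, ∀ s ∈ Icc (0:ℝ) 1, δ * s ≤ infDist (γ y s) (frontier Ω))
    (hγ' : ∀ y ∈ Ω, ∀ s ∈ Icc (0:ℝ) 1,
      HasDerivAt (γ y) (γ' y s) s ∧ ‖γ' y s‖ ≤ K)
    (φ : EuclideanSpace ℝ (Fin n) → ℝ) (hφ : ContDiff ℝ (⊤ : ℕ∞) φ)
    (hφsupp : tsupport φ ⊆ ball (0 : EuclideanSpace ℝ (Fin n)) (δ / 2)) :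
    ∃ C : ℝ, 0 < C ∧ ∀ x ∈ Ω, ∀ y ∈ Ω,
      ‖johnKernel γ γ' φ x y‖ * ‖x - y‖ ^ (n - 1) ≤ C * ⨆ z, |φ z| := by
  have hφc : Continuous φ := hφ.continuous
  set M := ⨆ z, |φ z| with hMdef
  obtain ⟨C₀, hC₀⟩ : ∃ C₀, ∀ z, ‖φ z‖ ≤ C₀ := by
    have hcs : HasCompactSupport φ :=
      (isCompact_closedBall (0 : EuclideanSpace ℝ (Fin n)) (δ/2)).of_isClosed_subset
        (isClosed_tsupport φ) (hφsupp.trans ball_subset_closedBall)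
    exact hcs.exists_bound_of_continuous hφc
  have hM : ∀ z, |φ z| ≤ M := by
    intro z
    exact le_ciSup ⟨C₀, by rintro _ ⟨w, rfl⟩; exact hC₀ w⟩ z
  have hM0 : 0 ≤ M := (abs_nonneg _).trans (hM 0)
  obtain ⟨R, hR0, hR⟩ : ∃ R, 0 < R ∧ Ω ⊆ ball 0 R := hΩb.subset_ball_lt 0 0
  set a : ℝ := K + δ / 2 with hadef
  have ha : 0 < a := by positivity
  refine ⟨a ^ n + a * (2 * R) ^ (n - 1) + δ + 1, by positivity, ?_⟩
  intro x hx y hy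
  set F : ℝ → EuclideanSpace ℝ (Fin n) := fun s => s⁻¹ • (x - γ y s) with hFdef
  set f : ℝ → EuclideanSpace ℝ (Fin n) :=
    fun s => ((s ^ n)⁻¹ * φ (F s)) • (γ' y s + F s) with hfdef
  have hJK : johnKernel γ γ' φ x y = -∫ s in (0:ℝ)..1, f s := rfl
  by_cases hint : IntervalIntegrable f volume 0 1
  swap
  · rw [hJK, intervalIntegral.integral_undef hint]
    simp only [norm_neg, norm_zero, zero_mul]
    positivity
  have hsupp : ∀ s ∈ Ioc (0:ℝ) 1, φ (F s) ≠ 0 → ‖x - y‖ < s * a ∧ ‖F s‖ < δ / 2 := by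
    intro s hs hne
    have hFb : F s ∈ ball (0 : EuclideanSpace ℝ (Fin n)) (δ/2) :=
      hφsupp (subset_tsupport φ hne)
    have hFn : ‖F s‖ < δ / 2 := by simpa [mem_ball_zero_iff] using hFb
    refine ⟨?_, hFn⟩
    have hxγ : ‖x - γ y s‖ < s * (δ / 2) := by
      have hh : x - γ y s = s • F s := by
        simp [hFdef, smul_smul, mul_inv_cancel₀ (ne_of_gt hs.1)]
      rw [hh, norm_smul, Real.norm_eq_abs, abs_of_pos hs.1]
      exact mul_lt_mul_of_pos_left hFn hs.1
    have hγy : ‖γ y s - y‖ ≤ K * s := by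
      have hmvt := Convex.norm_image_sub_le_of_norm_hasDerivWithin_le
        (f := γ y) (f' := γ' y) (s := Icc (0:ℝ) 1)
        (fun t ht => ((hγ' y hy t ht).1).hasDerivWithinAt)
        (fun t ht => (hγ' y hy t ht).2) (convex_Icc 0 1)
        ⟨le_refl 0, zero_le_one⟩ ⟨hs.1.le, hs.2⟩
      rw [hγ0 y hy] at hmvt
      simpa [abs_of_pos hs.1] using hmvt
    calc ‖x - y‖ ≤ ‖x - γ y s‖ + ‖γ y s - y‖ := norm_sub_le_norm_sub_add_norm_sub x _ y
      _ < s * (δ/2) + K * s := by linarith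
      _ = s * a := by rw [hadef]; ring
  rcases eq_or_lt_of_le hn with hn1 | hn2
  · -- n = 1 : FTC argument
    subst hn1
    set u : EuclideanSpace ℝ (Fin 1) := EuclideanSpace.single (0:Fin 1) (1:ℝ) with hudef
    have hnu : ‖u‖ = 1 := by rw [hudef, EuclideanSpace.norm_single]; exact norm_one
    have hkey : ∀ v : EuclideanSpace ℝ (Fin 1), (v 0) • u = v := by
      intro v; ext i; fin_cases i; simp [hudef]
    have hnorm1 : ∀ v : EuclideanSpace ℝ (Fin 1), ‖v‖ = |v 0| := by
      intro v; rw [EuclideanSpace.norm_eq]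
      simp [Fin.sum_univ_one, Real.sqrt_sq_eq_abs]
    set ψ : ℝ → ℝ := fun t => φ (t • u) with hψdef
    have hψc : Continuous ψ := hφc.comp (continuous_id.smul continuous_const)
    have hψM : ∀ t : ℝ, ‖ψ t‖ ≤ M := by
      intro t
      simp only [hψdef, Real.norm_eq_abs]
      exact hM _
    have hψ0 : ∀ t : ℝ, δ/2 ≤ |t| → ψ t = 0 := by
      intro t ht
      show φ (t • u) = 0
      by_contra hne
      have hmem := hφsupp (subset_tsupport φ (Function.mem_support.mpr hne))
      rw [mem_ball_zero_iff, norm_smul, Real.norm_eq_abs, hnu, mul_one] at hmem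
      linarith
    have hψint : ∀ p q : ℝ, IntervalIntegrable ψ volume p q :=
      fun p q => hψc.intervalIntegrable p q
    set Φ : ℝ → ℝ := fun c => ∫ t in (0:ℝ)..c, ψ t with hΦdef
    have hb : ∀ p q : ℝ, |∫ t in p..q, ψ t| ≤ M * |q - p| := by
      intro p q
      have := intervalIntegral.norm_integral_le_of_norm_le_const
        (C := M) (f := ψ) (a := p) (b := q) (fun t _ => hψM t)
      simpa using this
    have hΦb : ∀ c : ℝ, |Φ c| ≤ δ/2 * M := by
      intro c
      rcases le_or_gt |c| (δ/2) with h | h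
      · calc |Φ c| ≤ M * |c - 0| := hb 0 c
          _ ≤ δ/2 * M := by rw [sub_zero]; nlinarith [abs_nonneg c]
      rcases le_or_gt 0 c with hc | hc
      · have hcg : δ/2 < c := by rwa [abs_of_nonneg hc] at h
        have hsplit : Φ c = (∫ t in (0:ℝ)..(δ/2), ψ t) + ∫ t in (δ/2)..c, ψ t :=
          (intervalIntegral.integral_add_adjacent_intervals (hψint _ _) (hψint _ _)).symm
        have hzero : ∫ t in (δ/2)..c, ψ t = 0 := by
          rw [intervalIntegral.integral_congr (g := fun _ => (0:ℝ)) ?_]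
          · simp
          · rw [uIcc_of_le hcg.le]
            exact fun t ht => hψ0 t (by rw [abs_of_nonneg (by linarith [ht.1])]; linarith [ht.1])
        rw [hsplit, hzero, add_zero]
        calc |∫ t in (0:ℝ)..(δ/2), ψ t| ≤ M * |δ/2 - 0| := hb 0 (δ/2)
          _ = δ/2 * M := by rw [sub_zero, abs_of_pos (by linarith)]; ring
      · have hcg : c < -(δ/2) := by
          rw [abs_of_neg hc] at h; linarith
        have hsplit : Φ c = (∫ t in (0:ℝ)..(-(δ/2)), ψ t) + ∫ t in (-(δ/2))..c, ψ t :=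
          (intervalIntegral.integral_add_adjacent_intervals (hψint _ _) (hψint _ _)).symm
        have hzero : ∫ t in (-(δ/2))..c, ψ t = 0 := by
          rw [intervalIntegral.integral_congr (g := fun _ => (0:ℝ)) ?_]
          · simp
          · rw [uIcc_of_ge hcg.le]
            refine fun t ht => hψ0 t ?_
            rw [abs_of_nonpos (by linarith [ht.2])]; linarith [ht.2]
        rw [hsplit, hzero, add_zero]
        calc |∫ t in (0:ℝ)..(-(δ/2)), ψ t| ≤ M * |(-(δ/2)) - 0| := hb 0 _
          _ = δ/2 * M := by
              rw [sub_zero, abs_neg, abs_of_pos (by linarith)]; ring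
    have hΦd : ∀ c : ℝ, HasDerivAt Φ (ψ c) c := fun c =>
      intervalIntegral.integral_hasDerivAt_right (hψint 0 c)
        (hψc.aestronglyMeasurable.stronglyMeasurableAtFilter) hψc.continuousAt
    have hεb : ∀ ε ∈ Ioc (0:ℝ) 1, ‖∫ s in ε..1, f s‖ ≤ δ * M := by
      intro ε hε
      have hsub : uIcc ε 1 ⊆ uIcc 0 1 := by
        rw [uIcc_of_le hε.2, uIcc_of_le zero_le_one]
        exact Icc_subset_Icc hε.1.le le_rfl
      have hfε : IntervalIntegrable f volume ε 1 := hint.mono_set hsub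
      set G : ℝ → ℝ := fun s => Φ ((F s) 0) with hGdef
      have hGd : ∀ s ∈ uIcc ε 1, HasDerivAt G (-(f s 0)) s := by
        intro s hs
        rw [uIcc_of_le hε.2] at hs
        have hs0 : 0 < s := lt_of_lt_of_le hε.1 hs.1
        have hγd' := (hγ' y hy s ⟨hs0.le, hs.2⟩).1
        have hFd : HasDerivAt F (s⁻¹ • -γ' y s + -(s ^ 2)⁻¹ • (x - γ y s)) s :=
          (hasDerivAt_inv (ne_of_gt hs0)).smul (hγd'.const_sub x)
        have hcoord : HasDerivAt (fun t => (F t) 0)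
            ((s⁻¹ • -γ' y s + -(s ^ 2)⁻¹ • (x - γ y s)) 0) s := by
          have hcc := (EuclideanSpace.proj (0:Fin 1)).hasFDerivAt.comp_hasDerivAt s hFd
          exact hcc
        have hcomp : HasDerivAt G
            (ψ ((F s) 0) * ((s⁻¹ • -γ' y s + -(s ^ 2)⁻¹ • (x - γ y s)) 0)) s :=
          by have := (hΦd ((F s) 0)).comp s hcoord; exact this
        convert hcomp using 1
        show -(f s 0) = ψ (F s 0) * ((s⁻¹ • -γ' y s + -(s ^ 2)⁻¹ • (x - γ y s)) 0)
        have hψval : ψ (F s 0) = φ (F s) := by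
          show φ ((F s 0) • u) = φ (F s)
          rw [hkey]
        rw [hψval]
        simp only [hfdef, hFdef, PiLp.smul_apply, PiLp.add_apply, PiLp.neg_apply,
          PiLp.sub_apply, smul_eq_mul, pow_one]
        field_simp
        ring
      have hD : IntervalIntegrable (fun s => -(f s 0)) volume ε 1 := by
        have hD0 : IntervalIntegrable (fun s => (f s) 0) volume ε 1 := by
          constructor
          · have hcc := (EuclideanSpace.proj (0:Fin 1) : EuclideanSpace ℝ (Fin 1) →L[ℝ] ℝ).integrable_comp hfε.1
            exact hcc
          · have hcc := (EuclideanSpace.proj (0:Fin 1) : EuclideanSpace ℝ (Fin 1) →L[ℝ] ℝ).integrable_comp hfε.2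
            exact hcc
        exact hD0.neg
      have hFTC : ∫ s in ε..1, -(f s 0) = G 1 - G ε :=
        intervalIntegral.integral_eq_sub_of_hasDerivAt hGd hD
      have hcoordint : (∫ s in ε..1, f s) 0 = ∫ s in ε..1, (f s) 0 := by
        have hcc := (EuclideanSpace.proj (0:Fin 1)).intervalIntegral_comp_comm hfε
        simpa only [PiLp.proj_apply] using hcc.symm
      have hval : ∫ s in ε..1, (f s) 0 = G ε - G 1 := by
        rw [intervalIntegral.integral_neg] at hFTC
        linarith
      rw [hnorm1, hcoordint, hval]
      calc |G ε - G 1| ≤ |G ε| + |G 1| := abs_sub _ _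
        _ ≤ δ/2*M + δ/2*M := add_le_add (hΦb _) (hΦb _)
        _ = δ * M := by ring
    have hcont : ContinuousWithinAt (fun b => ∫ s in (1:ℝ)..b, f s) (Icc 0 1) 0 := by
      apply intervalIntegral.continuousWithinAt_primitive (measure_singleton 0)
      simp only [min_eq_right (zero_le_one : (0:ℝ) ≤ 1), max_self]
      exact hint
    have hnb : (nhdsWithin (0:ℝ) (Ioc (0:ℝ) 1)).NeBot := by
      apply mem_closure_iff_nhdsWithin_neBot.mp
      rw [closure_Ioc (zero_ne_one : (0:ℝ) ≠ 1)]
      exact ⟨le_refl 0, zero_le_one⟩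
    have htend : Filter.Tendsto (fun b => ‖∫ s in (1:ℝ)..b, f s‖)
        (nhdsWithin (0:ℝ) (Ioc (0:ℝ) 1)) (𝓝 ‖∫ s in (1:ℝ)..(0:ℝ), f s‖) :=
      ((hcont.mono Ioc_subset_Icc_self).tendsto).norm
    have hfinal : ‖∫ s in (1:ℝ)..(0:ℝ), f s‖ ≤ δ * M := by
      apply le_of_tendsto htend
      filter_upwards [self_mem_nhdsWithin] with ε hε
      rw [intervalIntegral.integral_symm, norm_neg]
      exact hεb ε hε
    have hgoal : ‖∫ s in (0:ℝ)..1, f s‖ ≤ δ * M := by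
      rw [show (∫ s in (0:ℝ)..1, f s) = -∫ s in (1:ℝ)..(0:ℝ), f s from
        intervalIntegral.integral_symm 1 0, norm_neg]
      exact hfinal
    have h11 : ‖x - y‖ ^ (1 - 1) = 1 := pow_zero _
    rw [hJK, norm_neg, h11, mul_one]
    calc ‖∫ s in (0:ℝ)..1, f s‖ ≤ δ * M := hgoal
      _ ≤ (a ^ 1 + a * (2 * R) ^ (1 - 1) + δ + 1) * M := by
          nlinarith [mul_nonneg (by positivity : (0:ℝ) ≤ a ^ 1 + a * (2*R) ^ (1-1) + 1) hM0]
  · -- n ≥ 2 : crude bound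
    have hn1 : 1 ≤ n - 1 := by omega
    by_cases hxy : x = y
    · subst hxy
      have hz : ‖x - x‖ ^ (n-1) = 0 := by
        simp [sub_self, zero_pow (by omega : n - 1 ≠ 0)]
      rw [hz, mul_zero]
      positivity
    have hr : 0 < ‖x - y‖ := by
      rw [norm_pos_iff]; exact sub_ne_zero_of_ne hxy
    set r := ‖x - y‖ with hrdef
    set s₁ : ℝ := min (r / a) 1 with hs₁def
    have hs₁0 : 0 < s₁ := lt_min (by positivity) one_pos
    have hs₁1 : s₁ ≤ 1 := min_le_right _ _
    have hf0 : ∀ s ∈ Icc (0:ℝ) s₁, f s = 0 := by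
      intro s hs
      rcases eq_or_lt_of_le hs.1 with h0 | h0
      · rw [hfdef, ← h0]
        simp [zero_pow (by omega : n ≠ 0)]
      · have hsa : s * a ≤ r := by
          have hs0 : s ≤ r / a := hs.2.trans (min_le_left _ _)
          calc s * a ≤ (r / a) * a := by nlinarith
            _ = r := div_mul_cancel₀ r (ne_of_gt ha)
        have hφ0 : φ (F s) = 0 := by
          by_contra hne
          have := (hsupp s ⟨h0, hs.2.trans hs₁1⟩ hne).1
          linarith
        rw [hfdef]; simp [hφ0]
    have hsub1 : uIcc 0 s₁ ⊆ uIcc 0 1 := by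
      rw [uIcc_of_le hs₁0.le, uIcc_of_le zero_le_one]
      exact Icc_subset_Icc le_rfl hs₁1
    have hsub2 : uIcc s₁ 1 ⊆ uIcc 0 1 := by
      rw [uIcc_of_le hs₁1, uIcc_of_le zero_le_one]
      exact Icc_subset_Icc hs₁0.le le_rfl
    have h1 : IntervalIntegrable f volume 0 s₁ := hint.mono_set hsub1
    have h2 : IntervalIntegrable f volume s₁ 1 := hint.mono_set hsub2
    have hsplit : ∫ s in (0:ℝ)..1, f s = ∫ s in s₁..1, f s := by
      rw [← intervalIntegral.integral_add_adjacent_intervals h1 h2]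
      have h00 : ∫ s in (0:ℝ)..s₁, f s = 0 := by
        rw [intervalIntegral.integral_congr (g := fun _ => (0:EuclideanSpace ℝ (Fin n)))
          (by rw [uIcc_of_le hs₁0.le]; exact fun s hs => hf0 s hs)]
        simp
      rw [h00, zero_add]
    set g : ℝ → ℝ := fun s => (M * a) * s ^ (-(n:ℤ)) with hgdef
    have hgint : IntervalIntegrable g volume s₁ 1 := by
      apply ContinuousOn.intervalIntegrable
      apply ContinuousOn.mul continuousOn_const
      intro s hs
      rw [uIcc_of_le hs₁1] at hs
      exact (continuousAt_zpow₀ s _ (Or.inl (ne_of_gt (hs₁0.trans_le hs.1)))).continuousWithinAt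
    have hbound : ∀ᵐ t ∂(volume.restrict (uIoc s₁ 1)), ‖f t‖ ≤ g t := by
      rw [ae_restrict_iff' measurableSet_uIoc]
      apply Filter.Eventually.of_forall
      intro s hs
      rw [uIoc_of_le hs₁1] at hs
      have hs0 : 0 < s := hs₁0.trans hs.1
      have hzpow : (s:ℝ) ^ (-(n:ℤ)) = (s ^ n)⁻¹ := by
        rw [zpow_neg, zpow_natCast]
      by_cases hφ0 : φ (F s) = 0
      · rw [hfdef]; simp only [hφ0, mul_zero, zero_smul, norm_zero]
        rw [hgdef]; simp only; rw [hzpow]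
        positivity
      · obtain ⟨-, hFn⟩ := hsupp s ⟨hs0, hs.2⟩ hφ0
        have h2' : ‖γ' y s + F s‖ ≤ a := by
          calc ‖γ' y s + F s‖ ≤ ‖γ' y s‖ + ‖F s‖ := norm_add_le _ _
            _ ≤ K + δ/2 := add_le_add (hγ' y hy s ⟨hs0.le, hs.2⟩).2 hFn.le
        have h1' : |(s ^ n)⁻¹ * φ (F s)| ≤ (s^n)⁻¹ * M := by
          rw [abs_mul, abs_of_nonneg (by positivity : (0:ℝ) ≤ (s^n)⁻¹)]
          exact mul_le_mul_of_nonneg_left (hM _) (by positivity)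
        rw [hfdef, norm_smul, Real.norm_eq_abs]
        calc |(s ^ n)⁻¹ * φ (F s)| * ‖γ' y s + F s‖ ≤ ((s^n)⁻¹ * M) * a :=
              mul_le_mul h1' h2' (norm_nonneg _) (by positivity)
          _ = g s := by rw [hgdef]; simp only; rw [hzpow]; ring
    have hT1 : (1:ℝ) ≤ (s₁ ^ (n-1))⁻¹ := by
      have hp : (0:ℝ) < s₁ ^ (n-1) := by positivity
      have hle : s₁ ^ (n-1) ≤ 1 := pow_le_one₀ hs₁0.le hs₁1
      nlinarith [mul_inv_cancel₀ (ne_of_gt hp), inv_pos.mpr hp]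
    have hIg : |∫ s in s₁..1, g s| ≤ (M * a) * (s₁ ^ (n-1))⁻¹ := by
      have h0mem : (0:ℝ) ∉ uIcc s₁ 1 := by
        rw [uIcc_of_le hs₁1]; rintro ⟨h0', -⟩; linarith
      have hz : ∫ s in s₁..1, (s:ℝ) ^ (-(n:ℤ)) =
          ((1:ℝ) ^ (-(n:ℤ)+1) - s₁ ^ (-(n:ℤ)+1)) / (((-(n:ℤ)+1) : ℤ) : ℝ) := by
        have := integral_zpow (a := s₁) (b := 1) (n := -(n:ℤ)) (Or.inr ⟨by omega, h0mem⟩)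
        exact_mod_cast this
      have hexp : s₁ ^ (-(n:ℤ)+1) = (s₁ ^ (n-1) : ℝ)⁻¹ := by
        rw [show -(n:ℤ)+1 = -((n:ℤ)-1) by ring, show ((n:ℤ)-1) = ((n-1:ℕ):ℤ) by omega,
          zpow_neg, zpow_natCast]
      rw [intervalIntegral.integral_const_mul, hz, one_zpow, hexp, abs_mul]
      rw [abs_of_nonneg (by positivity : (0:ℝ) ≤ M * a)]
      apply mul_le_mul_of_nonneg_left _ (by positivity)
      set T : ℝ := (s₁ ^ (n-1) : ℝ)⁻¹ with hTdef
      have hden : (((-(n:ℤ)+1 : ℤ)) : ℝ) = -((n:ℝ)-1) := by push_cast; ring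
      rw [hden]
      have hn2' : (2:ℝ) ≤ (n:ℝ) := by exact_mod_cast hn2
      rw [div_neg, abs_neg, abs_div, abs_sub_comm (1:ℝ) T,
        abs_of_nonneg (by linarith : (0:ℝ) ≤ T - 1),
        abs_of_nonneg (by linarith : (0:ℝ) ≤ (n:ℝ)-1)]
      have hds : (T-1)/((n:ℝ)-1) ≤ T - 1 := div_le_self (by linarith) (by linarith)
      linarith
    have hnorm : ‖∫ s in (0:ℝ)..1, f s‖ ≤ (M * a) * (s₁ ^ (n-1))⁻¹ := by
      rw [hsplit]
      exact (intervalIntegral.norm_integral_le_abs_of_norm_le hbound hgint).trans hIg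
    rw [hJK, norm_neg]
    rcases le_total (r/a) 1 with hc | hc
    · have hs₁ : s₁ = r/a := min_eq_left hc
      have key : (s₁ ^ (n-1))⁻¹ * r ^ (n-1) = a ^ (n-1) := by
        rw [hs₁, ← inv_pow, ← mul_pow, inv_div, div_mul_cancel₀ a (ne_of_gt hr)]
      calc ‖∫ s in (0:ℝ)..1, f s‖ * r ^ (n-1)
          ≤ ((M * a) * (s₁ ^ (n-1))⁻¹) * r ^ (n-1) :=
            mul_le_mul_of_nonneg_right hnorm (by positivity)
        _ = M * (a * a ^ (n-1)) := by rw [mul_assoc, key]; ring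
        _ = M * a ^ n := by rw [← pow_succ', show n-1+1 = n from by omega]
        _ ≤ (a ^ n + a * (2 * R) ^ (n - 1) + δ + 1) * M := by
            nlinarith [mul_nonneg (by positivity : (0:ℝ) ≤ a * (2*R)^(n-1) + δ + 1) hM0]
    · have hs₁ : s₁ = 1 := min_eq_right hc
      have hnorm' : ‖∫ s in (0:ℝ)..1, f s‖ ≤ M * a := by
        have := hnorm
        rw [hs₁, one_pow, inv_one, mul_one] at this
        exact this
      have hrR : r ≤ 2 * R := by
        have hxR : ‖x‖ < R := mem_ball_zero_iff.mp (hR hx)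
        have hyR : ‖y‖ < R := mem_ball_zero_iff.mp (hR hy)
        calc r ≤ ‖x‖ + ‖y‖ := norm_sub_le x y
          _ ≤ 2 * R := by linarith
      calc ‖∫ s in (0:ℝ)..1, f s‖ * r ^ (n-1)
          ≤ (M * a) * r ^ (n-1) := mul_le_mul_of_nonneg_right hnorm' (by positivity)
        _ ≤ (M * a) * (2*R) ^ (n-1) :=
            mul_le_mul_of_nonneg_left (pow_le_pow_left₀ hr.le hrR _) (by positivity)
        _ ≤ (a ^ n + a * (2 * R) ^ (n - 1) + δ + 1) * M := by
            nlinarith [mul_nonneg (by positivity : (0:ℝ) ≤ a^n + δ + 1) hM0]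
end
end

section
/- Let Ω ⊆ ℝⁿ be a bounded John domain with constants δ, K, John curves γ(·,y), and φ ∈ C₀^∞ with supp φ ⊆ B(0, δ/2). If G(x,y) ≠ 0 (where G is the kernel G(x,y) = −∫₀¹ ( γ̇(s,y) + (x − γ(s,y))/s ) φ((x − γ(s,y))/s) s^{−n} ds), then |x − y| ≤ (1 + 2K/δ) d(x), where d(x) is the distance from x to ∂Ω. -/
open MeasureTheory Metric Set

noncomputable section

/-- If `G(x,y) ≠ 0` then `|x - y| ≤ (1 + 2K/δ) d(x)`, where `d(x) = dist(x, ∂Ω)`. -/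
theorem kernel_support {n : ℕ} (hn : 1 ≤ n)
    (Ω : Set (EuclideanSpace ℝ (Fin n))) (hΩo : IsOpen Ω)
    (hΩb : Bornology.IsBounded Ω) (h0 : (0 : EuclideanSpace ℝ (Fin n)) ∈ Ω)
    (δ K : ℝ) (hδ : 0 < δ) (hK : 0 < K)
    (γ γ' : EuclideanSpace ℝ (Fin n) → ℝ → EuclideanSpace ℝ (Fin n))
    (hγ0 : ∀ y ∈ Ω, γ y 0 = y) (hγ1 : ∀ y ∈ Ω, γ y 1 = 0)
    (hγΩ : ∀ y ∈ Ω, ∀ s ∈ Icc (0:ℝ) 1, γ y s ∈ Ω)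
    (hγd : ∀ y ∈ Ω, ∀ s ∈ Icc (0:ℝ) 1, δ * s ≤ infDist (γ y s) (frontier Ω))
    (hγ' : ∀ y ∈ Ω, ∀ s ∈ Icc (0:ℝ) 1,
      HasDerivAt (γ y) (γ' y s) s ∧ ‖γ' y s‖ ≤ K)
    (φ : EuclideanSpace ℝ (Fin n) → ℝ) (hφ : ContDiff ℝ (⊤ : ℕ∞) φ)
    (hφsupp : tsupport φ ⊆ ball (0 : EuclideanSpace ℝ (Fin n)) (δ / 2)) :
    ∀ (x : EuclideanSpace ℝ (Fin n)), ∀ y ∈ Ω,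
      johnKernel γ γ' φ x y ≠ 0 →
      ‖x - y‖ ≤ (1 + 2 * K / δ) * infDist x (frontier Ω) := by
  intro x y hy hG
  by_contra hcon
  push_neg at hcon
  apply hG
  unfold johnKernel
  rw [intervalIntegral.integral_of_le (by norm_num : (0:ℝ) ≤ 1)]
  rw [MeasureTheory.setIntegral_eq_zero_of_forall_eq_zero, neg_zero]
  intro s hs
  have hs0 : 0 < s := hs.1
  have hsIcc : s ∈ Icc (0:ℝ) 1 := ⟨hs0.le, hs.2⟩
  have hφ0 : φ (s⁻¹ • (x - γ y s)) = 0 := by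
    by_contra hne
    have hball := hφsupp (subset_tsupport φ hne)
    rw [mem_ball_zero_iff, norm_smul, norm_inv, Real.norm_eq_abs, abs_of_pos hs0] at hball
    have hnorm : ‖x - γ y s‖ < s * (δ / 2) := by
      have h := (mul_lt_mul_iff_right₀ hs0).2 hball
      rwa [← mul_assoc, mul_inv_cancel₀ hs0.ne', one_mul] at h
    have hd : δ * s ≤ infDist (γ y s) (frontier Ω) := hγd y hy s hsIcc
    have hlip : infDist (γ y s) (frontier Ω) ≤ infDist x (frontier Ω) + dist (γ y s) x :=
      infDist_le_infDist_add_dist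
    have hdistxy : dist (γ y s) x = ‖x - γ y s‖ := by rw [dist_eq_norm, norm_sub_rev]
    have hdx : s * (δ / 2) ≤ infDist x (frontier Ω) := by
      rw [hdistxy] at hlip; nlinarith
    have hmv : ‖γ y s - γ y 0‖ ≤ K * (s - 0) := by
      refine norm_image_sub_le_of_norm_deriv_le_segment' (f' := γ' y)
        (fun t ht => ((hγ' y hy t ht).1).hasDerivWithinAt)
        (fun t ht => (hγ' y hy t (Ico_subset_Icc_self ht)).2) s hsIcc
    rw [hγ0 y hy, sub_zero] at hmv
    have hxy : ‖x - y‖ ≤ ‖x - γ y s‖ + ‖γ y s - y‖ := by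
      have : x - y = (x - γ y s) + (γ y s - y) := by abel
      rw [this]; exact norm_add_le _ _
    have hpos : 0 < 1 + 2 * K / δ := by positivity
    have hkey : (1 + 2 * K / δ) * (s * (δ / 2)) = s * (δ / 2) + K * s := by
      field_simp
    have := mul_le_mul_of_nonneg_left hdx hpos.le
    rw [hkey] at this
    linarith
  rw [hφ0, mul_zero, zero_smul]
end
end

section
/- Let (Ω, μ) and (Ω, ν) be measure spaces on a domain Ω ⊆ ℝⁿ with μ finite, let 1 ≤ q < ∞, and suppose there is a constant C₁ such that for every locally Lipschitz f on Ω and every t > 0, μ{ x ∈ Ω : |f(x) − f_φ| > t } t^q ≤ C₁ ( ∫_Ω |∇f| dν )^q, where f_φ is a fixed bounded linear average of f. Then there exists C₂ such that inf_{a ∈ ℝ} ( ∫_Ω |f − a|^q dμ )^{1/q} ≤ C₂ ∫_Ω |∇f| dν for all locally Lipschitz f. -/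
open MeasureTheory Metric Set

noncomputable section

section Aux

variable {E : Type*} [NormedAddCommGroup E] [NormedSpace ℝ E]

/-- The scalar truncation map is 1-Lipschitz. -/
lemma trunc_lipschitzWith (m A B : ℝ) :
    LipschitzWith 1 (fun t : ℝ => min (max (t - m) A) B - A) := by
  have h1 : LipschitzWith 1 (fun t : ℝ => t - m) :=
    LipschitzWith.of_dist_le_mul fun x y => by simp [Real.dist_eq]
  have h2 := h1.max_const A
  have h3 := h2.min_const B
  have h4 : LipschitzWith 1 (fun t : ℝ => t - A) :=
    LipschitzWith.of_dist_le_mul fun x y => by simp [Real.dist_eq]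
  have := h4.comp h3
  simpa [Function.comp_def] using this

/-- Composition of a Lipschitz map with a locally Lipschitz-on map. -/
lemma LipschitzWith.comp_locallyLipschitzOn' {α : Type*} [PseudoEMetricSpace α]
    {K : NNReal} {g : ℝ → ℝ} {s : Set α} {f : α → ℝ}
    (hg : LipschitzWith K g) (hf : LocallyLipschitzOn s f) :
    LocallyLipschitzOn s (fun x => g (f x)) := by
  intro x hx
  obtain ⟨K', t, ht, hK'⟩ := hf hx
  exact ⟨K * K', t, ht, hg.comp_lipschitzOnWith hK'⟩

/-- Key pointwise bound for the derivative of a truncation. -/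
lemma trunc_fderiv_bound {Ω : Set E} (hΩo : IsOpen Ω) {f : E → ℝ}
    (hfc : ContinuousOn f Ω) {m A B : ℝ} (hAB : A < B) {x : E} (hx : x ∈ Ω) :
    ‖fderiv ℝ (fun y => min (max (f y - m) A) B - A) x‖ ≤
      (Ω ∩ f ⁻¹' Set.Ioo (m + A) (m + B)).indicator (fun y => ‖fderiv ℝ f y‖) x := by
  set g : E → ℝ := fun y => min (max (f y - m) A) B - A with hg
  have hcx : ContinuousAt f x := hfc.continuousAt (hΩo.mem_nhds hx)
  have hind_nonneg : 0 ≤ (Ω ∩ f ⁻¹' Set.Ioo (m + A) (m + B)).indicator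
      (fun y => ‖fderiv ℝ f y‖) x :=
    Set.indicator_nonneg (fun y _ => norm_nonneg _) x
  have hg_nonneg : ∀ y, 0 ≤ g y := by
    intro y
    have : A ≤ min (max (f y - m) A) B := le_min (le_max_right _ _) hAB.le
    simpa [hg] using this
  have hg_le : ∀ y, g y ≤ B - A := by
    intro y
    have : min (max (f y - m) A) B ≤ B := min_le_right _ _
    simpa [hg] using sub_le_sub_right this A
  rcases lt_trichotomy (f x) (m + A) with h1 | h1 | h1
  · -- f x < m + A : locally constant 0
    have hev : ∀ᶠ y in nhds x, f y < m + A := hcx.eventually_lt continuousAt_const h1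
    have heq : g =ᶠ[nhds x] fun _ => 0 := by
      filter_upwards [hev] with y hy
      have : max (f y - m) A = A := max_eq_right (by linarith)
      simp [hg, this, min_eq_left hAB.le]
    rw [heq.fderiv_eq]
    simpa using hind_nonneg
  · -- f x = m + A : global minimum
    have hgx : g x = 0 := by
      have : max (f x - m) A = A := max_eq_right (by linarith)
      simp [hg, this, min_eq_left hAB.le]
    have hmin : IsLocalMin g x := by
      apply Filter.Eventually.of_forall
      intro y
      rw [hgx]; exact hg_nonneg y
    rw [hmin.fderiv_eq_zero]
    simpa using hind_nonneg
  · rcases lt_trichotomy (f x) (m + B) with h2 | h2 | h2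
    · -- m + A < f x < m + B : locally equal to f - (m + A)
      have hev : ∀ᶠ y in nhds x, f y ∈ Set.Ioo (m + A) (m + B) :=
        hcx.preimage_mem_nhds (Ioo_mem_nhds h1 h2)
      have heq : g =ᶠ[nhds x] fun y => f y - (m + A) := by
        filter_upwards [hev] with y hy
        have h3 : max (f y - m) A = f y - m := max_eq_left (by have := hy.1; linarith)
        have h4 : min (f y - m) B = f y - m := min_eq_left (by have := hy.2; linarith)
        simp [hg, h3, h4]; ring
      rw [heq.fderiv_eq, fderiv_sub_const]
      have hxmem : x ∈ Ω ∩ f ⁻¹' Set.Ioo (m + A) (m + B) := ⟨hx, h1, h2⟩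
      rw [Set.indicator_of_mem hxmem]
    · -- f x = m + B : global maximum
      have hgx : g x = B - A := by
        have h3 : max (f x - m) A = f x - m := max_eq_left (by linarith)
        have h4 : min (f x - m) B = B := min_eq_right (by linarith)
        simp [hg, h3, h4]
      have hmax : IsLocalMax g x := by
        apply Filter.Eventually.of_forall
        intro y
        rw [hgx]; exact hg_le y
      rw [hmax.fderiv_eq_zero]
      simpa using hind_nonneg
    · -- f x > m + B : locally constant B - A
      have hev : ∀ᶠ y in nhds x, m + B < f y := continuousAt_const.eventually_lt hcx h2
      have heq : g =ᶠ[nhds x] fun _ => B - A := by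
        filter_upwards [hev] with y hy
        have h3 : max (f y - m) A = f y - m := max_eq_left (by linarith)
        have h4 : min (f y - m) B = B := min_eq_right (by linarith)
        simp [hg, h3, h4]
      rw [heq.fderiv_eq]
      simpa using hind_nonneg

end Aux

/-- Existence of a median for a finite measure. -/
lemma exists_median {α : Type*} [MeasurableSpace α] (μ : Measure α) [IsFiniteMeasure μ]
    (Ω : Set α) (f : α → ℝ) (hmeas : ∀ s : ℝ, MeasurableSet (Ω ∩ f ⁻¹' Set.Ioi s))
    (hΩ : μ Ω ≠ 0) :
    ∃ m : ℝ, μ Ω ≤ 2 * μ (Ω ∩ f ⁻¹' Set.Iic m) ∧ μ Ω ≤ 2 * μ (Ω ∩ f ⁻¹' Set.Ici m) := by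
  set T := μ Ω with hT
  have hTfin : T ≠ ⊤ := measure_ne_top μ Ω
  set G : ℝ → ENNReal := fun s => μ (Ω ∩ f ⁻¹' Set.Ioi s) with hG
  have hGanti : Antitone G := by
    intro s t hst
    exact measure_mono (Set.inter_subset_inter_right _ (Set.preimage_mono (Set.Ioi_subset_Ioi hst)))
  have hhalf_pos : 0 < T / 2 := ENNReal.half_pos hΩ
  have hhalf_lt : T / 2 < T := ENNReal.half_lt_self hΩ hTfin
  have hhalf_fin : T / 2 ≠ ⊤ := ne_top_of_le_ne_top hTfin ENNReal.half_le_self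
  set S : Set ℝ := {s | G s ≤ T / 2} with hS
  -- S is nonempty
  have hS_ne : S.Nonempty := by
    have htend : Filter.Tendsto (fun k : ℕ => G k) Filter.atTop
        (nhds (μ (⋂ k : ℕ, Ω ∩ f ⁻¹' Set.Ioi (k : ℝ)))) := by
      apply tendsto_measure_iInter_atTop
        (fun k => (hmeas _).nullMeasurableSet)
      · intro k l hkl
        exact Set.inter_subset_inter_right _
          (Set.preimage_mono (Set.Ioi_subset_Ioi (by exact_mod_cast hkl)))
      · exact ⟨0, measure_ne_top μ _⟩
    have hempty : (⋂ k : ℕ, Ω ∩ f ⁻¹' Set.Ioi (k : ℝ)) = ∅ := by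
      apply Set.eq_empty_iff_forall_notMem.2
      intro x hx
      obtain ⟨k, hk⟩ := exists_nat_gt (f x)
      exact absurd (Set.mem_iInter.1 hx k).2 (by simpa using hk.le)
    rw [hempty, measure_empty] at htend
    obtain ⟨k, hk⟩ := (htend.eventually_lt_const hhalf_pos).exists
    exact ⟨k, hk.le⟩
  -- S is bounded below
  have hbdd : BddBelow S := by
    have htend : Filter.Tendsto (fun k : ℕ => G (-(k : ℝ))) Filter.atTop
        (nhds (μ (⋃ k : ℕ, Ω ∩ f ⁻¹' Set.Ioi (-(k : ℝ))))) := by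
      apply tendsto_measure_iUnion_atTop
      intro k l hkl
      exact Set.inter_subset_inter_right _
        (Set.preimage_mono (Set.Ioi_subset_Ioi (by exact_mod_cast neg_le_neg (by exact_mod_cast hkl))))
    have hunion : (⋃ k : ℕ, Ω ∩ f ⁻¹' Set.Ioi (-(k : ℝ))) = Ω := by
      apply Set.Subset.antisymm
      · exact Set.iUnion_subset fun k => Set.inter_subset_left
      · intro x hx
        obtain ⟨k, hk⟩ := exists_nat_gt (-(f x))
        exact Set.mem_iUnion.2 ⟨k, hx, by simpa using neg_lt_of_neg_lt hk⟩
    rw [hunion] at htend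
    obtain ⟨N, hN⟩ := (htend.eventually_const_lt hhalf_lt).exists
    refine ⟨-(N : ℝ), fun s hs => ?_⟩
    by_contra hcon
    push_neg at hcon
    exact absurd (hGanti hcon.le) (by simp only [hS, Set.mem_setOf_eq] at hs; exact not_le.2 (lt_of_le_of_lt hs hN))
  set m := sInf S with hm
  -- G m ≤ T / 2
  have hGm : G m ≤ T / 2 := by
    have htend : Filter.Tendsto (fun n : ℕ => G (m + 1 / (n + 1))) Filter.atTop
        (nhds (μ (⋃ n : ℕ, Ω ∩ f ⁻¹' Set.Ioi (m + 1 / (n + 1))))) := by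
      apply tendsto_measure_iUnion_atTop
      intro k l hkl
      apply Set.inter_subset_inter_right _
      apply Set.preimage_mono
      apply Set.Ioi_subset_Ioi
      have : (1 : ℝ) / (l + 1) ≤ 1 / (k + 1) := by
        apply one_div_le_one_div_of_le (by positivity)
        exact_mod_cast add_le_add_left (by exact_mod_cast hkl) 1
      linarith
    have hunion : (⋃ n : ℕ, Ω ∩ f ⁻¹' Set.Ioi (m + 1 / (n + 1))) = Ω ∩ f ⁻¹' Set.Ioi m := by
      apply Set.Subset.antisymm
      · refine Set.iUnion_subset fun n => Set.inter_subset_inter_right _ ?_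
        apply Set.preimage_mono
        apply Set.Ioi_subset_Ioi
        have h1 : (0:ℝ) < 1 / ((n:ℝ) + 1) := by positivity
        linarith
      · rintro x ⟨hxΩ, hxm⟩
        obtain ⟨n, hn⟩ := exists_nat_one_div_lt (K := ℝ) (sub_pos.2 (Set.mem_Ioi.1 hxm))
        exact Set.mem_iUnion.2 ⟨n, hxΩ, by simp only [Set.mem_preimage, Set.mem_Ioi]; linarith⟩
    rw [hunion] at htend
    apply le_of_tendsto htend
    apply Filter.Eventually.of_forall
    intro n
    obtain ⟨s, hsS, hsm⟩ := (csInf_lt_iff hbdd hS_ne).1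
      (show sInf S < m + 1 / (n + 1) by
        have h1 : (0:ℝ) < 1 / ((n:ℝ) + 1) := by positivity
        rw [hm]; linarith)
    exact le_trans (hGanti hsm.le) hsS
  -- for s < m, T/2 < G s
  have hGlt : ∀ s : ℝ, s < m → T / 2 < G s := by
    intro s hs
    by_contra hcon
    push_neg at hcon
    exact absurd (csInf_le hbdd (show s ∈ S from hcon)) (not_le.2 hs)
  refine ⟨m, ?_, ?_⟩
  · -- μ Ω ≤ 2 * μ (Ω ∩ f ⁻¹' Iic m)
    have hsplit : T ≤ μ (Ω ∩ f ⁻¹' Set.Iic m) + T / 2 := by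
      have : Ω ⊆ (Ω ∩ f ⁻¹' Set.Iic m) ∪ (Ω ∩ f ⁻¹' Set.Ioi m) := by
        intro x hx
        rcases le_or_gt (f x) m with h | h
        · exact Or.inl ⟨hx, h⟩
        · exact Or.inr ⟨hx, h⟩
      calc T ≤ μ ((Ω ∩ f ⁻¹' Set.Iic m) ∪ (Ω ∩ f ⁻¹' Set.Ioi m)) := measure_mono this
        _ ≤ μ (Ω ∩ f ⁻¹' Set.Iic m) + μ (Ω ∩ f ⁻¹' Set.Ioi m) := measure_union_le _ _
        _ ≤ μ (Ω ∩ f ⁻¹' Set.Iic m) + T / 2 := add_le_add_right hGm _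
    have h2 : T / 2 ≤ μ (Ω ∩ f ⁻¹' Set.Iic m) := by
      have := hsplit
      nth_rewrite 1 [← ENNReal.add_halves T] at this
      exact (ENNReal.add_le_add_iff_right hhalf_fin).1 this
    calc T = T / 2 + T / 2 := (ENNReal.add_halves T).symm
      _ ≤ μ (Ω ∩ f ⁻¹' Set.Iic m) + μ (Ω ∩ f ⁻¹' Set.Iic m) := add_le_add h2 h2
      _ = 2 * μ (Ω ∩ f ⁻¹' Set.Iic m) := (two_mul _).symm
  · -- μ Ω ≤ 2 * μ (Ω ∩ f ⁻¹' Ici m)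
    have htend : Filter.Tendsto (fun n : ℕ => G (m - 1 / (n + 1))) Filter.atTop
        (nhds (μ (⋂ n : ℕ, Ω ∩ f ⁻¹' Set.Ioi (m - 1 / (n + 1))))) := by
      apply tendsto_measure_iInter_atTop (fun n => (hmeas _).nullMeasurableSet)
      · intro k l hkl
        apply Set.inter_subset_inter_right _
        apply Set.preimage_mono
        apply Set.Ioi_subset_Ioi
        have : (1 : ℝ) / (l + 1) ≤ 1 / (k + 1) := by
          apply one_div_le_one_div_of_le (by positivity)
          exact_mod_cast add_le_add_left (by exact_mod_cast hkl) 1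
        linarith
      · exact ⟨0, measure_ne_top μ _⟩
    have hinter : (⋂ n : ℕ, Ω ∩ f ⁻¹' Set.Ioi (m - 1 / (n + 1))) = Ω ∩ f ⁻¹' Set.Ici m := by
      apply Set.Subset.antisymm
      · intro x hx
        have hxΩ : x ∈ Ω := (Set.mem_iInter.1 hx 0).1
        refine ⟨hxΩ, ?_⟩
        simp only [Set.mem_preimage, Set.mem_Ici]
        by_contra hcon
        push_neg at hcon
        obtain ⟨n, hn⟩ := exists_nat_one_div_lt (sub_pos.2 hcon)
        have := (Set.mem_iInter.1 hx n).2
        simp only [Set.mem_preimage, Set.mem_Ioi] at this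
        linarith
      · intro x hx
        apply Set.mem_iInter.2
        intro n
        refine ⟨hx.1, ?_⟩
        have h1 : (0:ℝ) < 1 / (n + 1) := by positivity
        have h2 : m ≤ f x := hx.2
        simp only [Set.mem_preimage, Set.mem_Ioi]
        linarith
    rw [hinter] at htend
    have h2 : T / 2 ≤ μ (Ω ∩ f ⁻¹' Set.Ici m) := by
      apply ge_of_tendsto htend
      apply Filter.Eventually.of_forall
      intro n
      have h1 : (0:ℝ) < 1 / (n + 1) := by positivity
      exact (hGlt (m - 1 / (n + 1)) (by linarith)).le
    calc T = T / 2 + T / 2 := (ENNReal.add_halves T).symm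
      _ ≤ μ (Ω ∩ f ⁻¹' Set.Ici m) + μ (Ω ∩ f ⁻¹' Set.Ici m) := add_le_add h2 h2
      _ = 2 * μ (Ω ∩ f ⁻¹' Set.Ici m) := (two_mul _).symm

/-- The main estimate for the super-median part of `f`. -/
lemma half_bound {n : ℕ} (Ω : Set (EuclideanSpace ℝ (Fin n))) (hΩo : IsOpen Ω)
    (μ ν : Measure (EuclideanSpace ℝ (Fin n))) [IsFiniteMeasure μ]
    (q : ℝ) (hq : 1 ≤ q)
    (φ : EuclideanSpace ℝ (Fin n) → ℝ)
    (C₁ : ℝ) (hC₁ : 0 < C₁)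
    (hweak : ∀ f : EuclideanSpace ℝ (Fin n) → ℝ, LocallyLipschitzOn Ω f →
      ∀ t : ℝ, 0 < t →
      (μ {x | x ∈ Ω ∧ t < |f x - ∫ z in Ω, f z * φ z|}).toReal * t ^ q
        ≤ C₁ * (∫ x in Ω, ‖fderiv ℝ f x‖ ∂ν) ^ q)
    (f : EuclideanSpace ℝ (Fin n) → ℝ) (hf : LocallyLipschitzOn Ω f) (m : ℝ)
    (hmed : μ Ω ≤ 2 * μ (Ω ∩ f ⁻¹' Set.Iic m))
    (hIint : IntegrableOn (fun x => ‖fderiv ℝ f x‖) Ω ν)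
    (hInt : IntegrableOn (fun x => |f x - m| ^ q) Ω μ) :
    ∫ x in Ω ∩ f ⁻¹' Set.Ioi m, |f x - m| ^ q ∂μ
      ≤ 2 * C₁ * 16 ^ q * (∫ x in Ω, ‖fderiv ℝ f x‖ ∂ν) ^ q := by
  have hq0 : (0:ℝ) < q := lt_of_lt_of_le one_pos hq
  have hqne : q ≠ 0 := ne_of_gt hq0
  set I : ℝ := ∫ x in Ω, ‖fderiv ℝ f x‖ ∂ν with hI
  have hI0 : 0 ≤ I := integral_nonneg fun _ => norm_nonneg _
  have hfc : ContinuousOn f Ω := hf.continuousOn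
  have hdouble : ∀ j : ℤ, (2:ℝ) ^ (j + 1) = 2 * 2 ^ j := fun j => by
    rw [zpow_add_one₀ (two_ne_zero)]; ring
  -- truncations
  set g : ℤ → EuclideanSpace ℝ (Fin n) → ℝ :=
    fun k y => min (max (f y - m) ((2:ℝ) ^ k)) ((2:ℝ) ^ (k + 1)) - (2:ℝ) ^ k with hgdef
  set U : ℤ → Set (EuclideanSpace ℝ (Fin n)) :=
    fun k => Ω ∩ f ⁻¹' Set.Ioo (m + (2:ℝ) ^ k) (m + (2:ℝ) ^ (k + 1)) with hUdef
  set a : ℤ → ℝ := fun k => ∫ x in U k, ‖fderiv ℝ f x‖ ∂ν with hadef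
  have hUopen : ∀ k, IsOpen (U k) := fun k =>
    hfc.isOpen_inter_preimage hΩo isOpen_Ioo
  have hUmeas : ∀ k, MeasurableSet (U k) := fun k => (hUopen k).measurableSet
  have hUsub : ∀ k, U k ⊆ Ω := fun k => Set.inter_subset_left
  have hUdisj : Pairwise (Function.onFun Disjoint U) := by
    have key : ∀ k l : ℤ, k < l → Disjoint (U k) (U l) := by
      intro k l hkl
      rw [Set.disjoint_left]
      rintro x ⟨_, hxk⟩ ⟨_, hxl⟩
      simp only [Set.mem_preimage, Set.mem_Ioo] at hxk hxl
      have h1 : (2:ℝ) ^ (k + 1) ≤ 2 ^ l := zpow_le_zpow_right₀ one_le_two (by omega)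
      linarith [hxk.2, hxl.1]
    intro k l hkl
    rcases hkl.lt_or_gt with h | h
    · exact key k l h
    · exact (key l k h).symm
  have ha_nonneg : ∀ k, 0 ≤ a k := fun k => integral_nonneg fun _ => norm_nonneg _
  have haF : ∀ F : Finset ℤ, ∑ k ∈ F, a k ≤ I := by
    intro F
    rw [hadef, ← integral_biUnion_finset F (fun k _ => hUmeas k)
      (fun k _ l _ hkl => hUdisj hkl) (fun k _ => hIint.mono_set (hUsub k))]
    apply setIntegral_mono_set hIint
      (Filter.Eventually.of_forall fun x => norm_nonneg _)
    exact HasSubset.Subset.eventuallyLE (Set.iUnion₂_subset fun k _ => hUsub k)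
  have ha_le_I : ∀ k, a k ≤ I := by
    intro k
    have := haF {k}
    simpa using this
  have hzpow_pos : ∀ j : ℤ, (0:ℝ) < 2 ^ j := fun j => zpow_pos two_pos j
  -- Lipschitz of truncations
  have hg_lip : ∀ k, LocallyLipschitzOn Ω (g k) := by
    intro k
    exact (trunc_lipschitzWith m ((2:ℝ) ^ k) ((2:ℝ) ^ (k + 1))).comp_locallyLipschitzOn' hf
  -- derivative bound
  have hgd : ∀ k : ℤ, ∀ x ∈ Ω, ‖fderiv ℝ (g k) x‖ ≤
      (U k).indicator (fun y => ‖fderiv ℝ f y‖) x := by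
    intro k x hx
    have hAB : (2:ℝ) ^ k < 2 ^ (k + 1) := by
      rw [hdouble k]; linarith [hzpow_pos k]
    exact trunc_fderiv_bound hΩo hfc hAB hx
  -- integral bound a' ≤ a
  have ha' : ∀ k : ℤ, (∫ x in Ω, ‖fderiv ℝ (g k) x‖ ∂ν) ≤ a k := by
    intro k
    have hind : Integrable ((U k).indicator fun y => ‖fderiv ℝ f y‖) (ν.restrict Ω) :=
      hIint.indicator (hUmeas k)
    have hle : (fun x => ‖fderiv ℝ (g k) x‖) ≤ᵐ[ν.restrict Ω]
        (U k).indicator fun y => ‖fderiv ℝ f y‖ := by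
      rw [Filter.EventuallyLE, ae_restrict_iff' hΩo.measurableSet]
      exact Filter.Eventually.of_forall (hgd k)
    calc (∫ x in Ω, ‖fderiv ℝ (g k) x‖ ∂ν)
        ≤ ∫ x, (U k).indicator (fun y => ‖fderiv ℝ f y‖) x ∂(ν.restrict Ω) :=
          integral_mono_of_nonneg (Filter.Eventually.of_forall fun x => norm_nonneg _) hind hle
      _ = ∫ x in U k, ‖fderiv ℝ f x‖ ∂(ν.restrict Ω) := integral_indicator (hUmeas k)
      _ = a k := by
          rw [hadef, Measure.restrict_restrict (hUmeas k),
            Set.inter_eq_self_of_subset_left (hUsub k)]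
  -- the key per-scale estimate
  have key : ∀ k : ℤ, (μ (Ω ∩ f ⁻¹' Set.Ioi (m + (2:ℝ) ^ (k + 1)))).toReal *
      ((2:ℝ) ^ (k - 2)) ^ q ≤ 2 * C₁ * (a k) ^ q := by
    intro k
    set t : ℝ := (2:ℝ) ^ (k - 2) with htdef
    have ht : 0 < t := hzpow_pos _
    set c : ℝ := ∫ z in Ω, g k z * φ z with hcdef
    have hwk := hweak (g k) (hg_lip k) t ht
    have hwk' : (μ {x | x ∈ Ω ∧ t < |g k x - c|}).toReal * t ^ q ≤ C₁ * (a k) ^ q := by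
      refine le_trans hwk ?_
      apply mul_le_mul_of_nonneg_left _ hC₁.le
      exact Real.rpow_le_rpow (integral_nonneg fun _ => norm_nonneg _) (ha' k) hq0.le
    have h1 : (2:ℝ) ^ (k - 1) = 2 * 2 ^ (k - 2) := by
      have := hdouble (k - 2)
      rwa [show k - 2 + 1 = k - 1 by ring] at this
    have h2 : (2:ℝ) ^ k = 2 * 2 ^ (k - 1) := by
      have := hdouble (k - 1)
      rwa [show k - 1 + 1 = k by ring] at this
    have h3 : (2:ℝ) ^ (k + 1) = 2 * 2 ^ k := hdouble k
    have ht2 : (0:ℝ) < 2 ^ (k - 2) := hzpow_pos _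
    by_cases hc : c ≤ (2:ℝ) ^ (k - 1)
    · -- case A
      have hsub : Ω ∩ f ⁻¹' Set.Ioi (m + (2:ℝ) ^ (k + 1)) ⊆
          {x | x ∈ Ω ∧ t < |g k x - c|} := by
        rintro x ⟨hxΩ, hfx⟩
        simp only [Set.mem_preimage, Set.mem_Ioi] at hfx
        refine ⟨hxΩ, ?_⟩
        have hgx : g k x = 2 ^ k := by
          have hmax : max (f x - m) ((2:ℝ) ^ k) = f x - m := by
            apply max_eq_left; nlinarith [hzpow_pos k]
          have hmin : min (f x - m) ((2:ℝ) ^ (k + 1)) = (2:ℝ) ^ (k + 1) := by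
            apply min_eq_right; linarith
          simp only [hgdef, hmax, hmin]
          rw [h3]; ring
        rw [hgx]
        have : t < 2 ^ k - c := by rw [htdef]; nlinarith
        exact lt_of_lt_of_le this (le_abs_self _)
      have hμle : (μ (Ω ∩ f ⁻¹' Set.Ioi (m + (2:ℝ) ^ (k + 1)))).toReal ≤
          (μ {x | x ∈ Ω ∧ t < |g k x - c|}).toReal :=
        ENNReal.toReal_mono (measure_ne_top μ _) (measure_mono hsub)
      have htq : (0:ℝ) ≤ t ^ q := Real.rpow_nonneg ht.le q
      have haq : (0:ℝ) ≤ C₁ * (a k) ^ q :=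
        mul_nonneg hC₁.le (Real.rpow_nonneg (ha_nonneg k) q)
      nlinarith [mul_le_mul_of_nonneg_right hμle htq]
    · -- case B
      push_neg at hc
      have hsub : Ω ∩ f ⁻¹' Set.Iic m ⊆ {x | x ∈ Ω ∧ t < |g k x - c|} := by
        rintro x ⟨hxΩ, hfx⟩
        simp only [Set.mem_preimage, Set.mem_Iic] at hfx
        refine ⟨hxΩ, ?_⟩
        have hgx : g k x = 0 := by
          have hmax : max (f x - m) ((2:ℝ) ^ k) = (2:ℝ) ^ k := by
            apply max_eq_right; nlinarith [hzpow_pos k]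
          have hmin : min ((2:ℝ) ^ k) ((2:ℝ) ^ (k + 1)) = (2:ℝ) ^ k := by
            apply min_eq_left; nlinarith [hzpow_pos k]
          simp only [hgdef, hmax, hmin]; ring
        rw [hgx]
        have habs : t < c := by rw [htdef]; nlinarith
        calc t < c := habs
          _ ≤ |0 - c| := by rw [zero_sub, abs_neg]; exact le_abs_self c
      have hμ1 : (μ (Ω ∩ f ⁻¹' Set.Iic m)).toReal * t ^ q ≤ C₁ * (a k) ^ q := by
        refine le_trans ?_ hwk'
        apply mul_le_mul_of_nonneg_right _ (Real.rpow_nonneg ht.le q)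
        exact ENNReal.toReal_mono (measure_ne_top μ _) (measure_mono hsub)
      have hμ2 : (μ (Ω ∩ f ⁻¹' Set.Ioi (m + (2:ℝ) ^ (k + 1)))).toReal ≤
          2 * (μ (Ω ∩ f ⁻¹' Set.Iic m)).toReal := by
        have hstep : (μ (Ω ∩ f ⁻¹' Set.Ioi (m + (2:ℝ) ^ (k + 1)))).toReal ≤ (μ Ω).toReal :=
          ENNReal.toReal_mono (measure_ne_top μ _) (measure_mono Set.inter_subset_left)
        have hmed' : (μ Ω).toReal ≤ (2 * μ (Ω ∩ f ⁻¹' Set.Iic m)).toReal :=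
          ENNReal.toReal_mono (ENNReal.mul_ne_top (by simp) (measure_ne_top μ _)) hmed
        rw [ENNReal.toReal_mul] at hmed'
        simp only [ENNReal.toReal_ofNat] at hmed'
        linarith
      have htq : (0:ℝ) ≤ t ^ q := Real.rpow_nonneg ht.le q
      nlinarith [mul_le_mul_of_nonneg_right hμ2 htq]
  -- the dyadic decomposition of the super-level set
  set Efam : ℤ → Set (EuclideanSpace ℝ (Fin n)) :=
    fun k => Ω ∩ f ⁻¹' Set.Ioc (m + (2:ℝ) ^ (k + 1)) (m + (2:ℝ) ^ (k + 2)) with hEdef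
  have hEmeas : ∀ k, MeasurableSet (Efam k) := by
    intro k
    have heq : Efam k = (Ω ∩ f ⁻¹' Set.Ioi (m + (2:ℝ) ^ (k + 1))) \
        (Ω ∩ f ⁻¹' Set.Ioi (m + (2:ℝ) ^ (k + 2))) := by
      ext x
      simp only [hEdef, Set.mem_inter_iff, Set.mem_preimage, Set.mem_Ioc, Set.mem_Ioi,
        Set.mem_diff, not_and, not_lt]
      constructor
      · rintro ⟨hxΩ, h1, h2⟩; exact ⟨⟨hxΩ, h1⟩, fun _ => h2⟩
      · rintro ⟨⟨hxΩ, h1⟩, h2⟩; exact ⟨hxΩ, h1, h2 hxΩ⟩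
    rw [heq]
    exact MeasurableSet.diff
      (hfc.isOpen_inter_preimage hΩo isOpen_Ioi).measurableSet
      (hfc.isOpen_inter_preimage hΩo isOpen_Ioi).measurableSet
  have hEdisj : Pairwise (Function.onFun Disjoint Efam) := by
    have key2 : ∀ k l : ℤ, k < l → Disjoint (Efam k) (Efam l) := by
      intro k l hkl
      rw [Set.disjoint_left]
      rintro x ⟨_, hxk⟩ ⟨_, hxl⟩
      simp only [Set.mem_preimage, Set.mem_Ioc] at hxk hxl
      have h1 : (2:ℝ) ^ (k + 2) ≤ 2 ^ (l + 1) := zpow_le_zpow_right₀ one_le_two (by omega)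
      linarith [hxk.2, hxl.1]
    intro k l hkl
    rcases hkl.lt_or_gt with h | h
    · exact key2 k l h
    · exact (key2 l k h).symm
  have hEcover : Ω ∩ f ⁻¹' Set.Ioi m = ⋃ k, Efam k := by
    apply Set.Subset.antisymm
    · rintro x ⟨hxΩ, hxm⟩
      simp only [Set.mem_preimage, Set.mem_Ioi] at hxm
      obtain ⟨j, hj⟩ := exists_mem_Ioc_zpow (x := f x - m) (y := (2:ℝ)) (by linarith) one_lt_two
      apply Set.mem_iUnion.2
      refine ⟨j - 1, hxΩ, ?_⟩
      simp only [Set.mem_preimage, Set.mem_Ioc]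
      have h1 : j - 1 + 1 = j := by ring
      have h2 : j - 1 + 2 = j + 1 := by ring
      rw [h1, h2]
      obtain ⟨hj1, hj2⟩ := hj
      constructor <;> linarith
    · apply Set.iUnion_subset
      intro k
      rintro x ⟨hxΩ, hx⟩
      simp only [Set.mem_preimage, Set.mem_Ioc] at hx
      exact ⟨hxΩ, by simp only [Set.mem_preimage, Set.mem_Ioi]; linarith [hzpow_pos (k + 1), hx.1]⟩
  -- per-piece estimate
  have perE : ∀ k : ℤ, ∫ x in Efam k, |f x - m| ^ q ∂μ ≤ 2 * C₁ * 16 ^ q * (a k) ^ q := by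
    intro k
    have h16 : (2:ℝ) ^ (k + 2) = 16 * 2 ^ (k - 2) := by
      have := zpow_add₀ (two_ne_zero : (2:ℝ) ≠ 0) (k - 2) 4
      rw [show k - 2 + 4 = k + 2 by ring] at this
      rw [this]
      norm_num
      ring
    have hCbound : ∀ x ∈ Efam k, ‖|f x - m| ^ q‖ ≤ (16 * (2:ℝ) ^ (k - 2)) ^ q := by
      rintro x ⟨hxΩ, hx⟩
      simp only [Set.mem_preimage, Set.mem_Ioc] at hx
      rw [Real.norm_eq_abs, abs_of_nonneg (Real.rpow_nonneg (abs_nonneg _) q)]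
      apply Real.rpow_le_rpow (abs_nonneg _) _ hq0.le
      rw [← h16]
      rw [abs_of_nonneg (by linarith [hzpow_pos (k + 1), hx.1])]
      linarith [hx.2]
    have hint : ∫ x in Efam k, |f x - m| ^ q ∂μ ≤
        (16 * (2:ℝ) ^ (k - 2)) ^ q * (μ (Efam k)).toReal := by
      have := norm_setIntegral_le_of_norm_le_const (measure_lt_top μ (Efam k))
        hCbound
      calc ∫ x in Efam k, |f x - m| ^ q ∂μ ≤ ‖∫ x in Efam k, |f x - m| ^ q ∂μ‖ :=
            le_abs_self _
        _ ≤ (16 * (2:ℝ) ^ (k - 2)) ^ q * (μ (Efam k)).toReal := this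
    have hmul : (16 * (2:ℝ) ^ (k - 2)) ^ q = 16 ^ q * ((2:ℝ) ^ (k - 2)) ^ q :=
      Real.mul_rpow (by norm_num) (hzpow_pos _).le
    have hμE : (μ (Efam k)).toReal ≤ (μ (Ω ∩ f ⁻¹' Set.Ioi (m + (2:ℝ) ^ (k + 1)))).toReal := by
      apply ENNReal.toReal_mono (measure_ne_top μ _)
      apply measure_mono
      rintro x ⟨hxΩ, hx⟩
      simp only [Set.mem_preimage, Set.mem_Ioc] at hx
      exact ⟨hxΩ, by simp only [Set.mem_preimage, Set.mem_Ioi]; exact hx.1⟩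
    have h16q : (0:ℝ) ≤ (16:ℝ) ^ q := Real.rpow_nonneg (by norm_num) q
    have hzq : (0:ℝ) ≤ ((2:ℝ) ^ (k - 2)) ^ q := Real.rpow_nonneg (hzpow_pos _).le q
    calc ∫ x in Efam k, |f x - m| ^ q ∂μ
        ≤ (16 * (2:ℝ) ^ (k - 2)) ^ q * (μ (Efam k)).toReal := hint
      _ = 16 ^ q * ((μ (Efam k)).toReal * ((2:ℝ) ^ (k - 2)) ^ q) := by rw [hmul]; ring
      _ ≤ 16 ^ q * ((μ (Ω ∩ f ⁻¹' Set.Ioi (m + (2:ℝ) ^ (k + 1)))).toReal *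
            ((2:ℝ) ^ (k - 2)) ^ q) := by
          apply mul_le_mul_of_nonneg_left _ h16q
          exact mul_le_mul_of_nonneg_right hμE hzq
      _ ≤ 16 ^ q * (2 * C₁ * (a k) ^ q) := mul_le_mul_of_nonneg_left (key k) h16q
      _ = 2 * C₁ * 16 ^ q * (a k) ^ q := by ring
  -- sum of (a k)^q over finite sets
  have hsum_rpow : ∀ F : Finset ℤ, ∑ k ∈ F, (a k) ^ q ≤ I ^ q := by
    intro F
    rcases eq_or_lt_of_le hI0 with hI0' | hIpos
    · have hak0 : ∀ k, a k = 0 := fun k =>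
        le_antisymm (le_trans (ha_le_I k) hI0'.symm.le) (ha_nonneg k)
      have : ∀ k ∈ F, (a k) ^ q = 0 := fun k _ => by rw [hak0 k, Real.zero_rpow hqne]
      rw [Finset.sum_congr rfl this]
      simp [Real.rpow_nonneg hI0 q]
    · have hterm : ∀ k, (a k) ^ q ≤ a k * I ^ (q - 1) := by
        intro k
        rcases eq_or_lt_of_le (ha_nonneg k) with hak | hak
        · rw [← hak, Real.zero_rpow hqne, zero_mul]
        · have : (a k) ^ q = a k * (a k) ^ (q - 1) := by
            rw [show q = 1 + (q - 1) by ring, Real.rpow_add hak, Real.rpow_one]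
            ring_nf
          rw [this]
          apply mul_le_mul_of_nonneg_left _ (ha_nonneg k)
          exact Real.rpow_le_rpow (ha_nonneg k) (ha_le_I k) (by linarith)
      calc ∑ k ∈ F, (a k) ^ q ≤ ∑ k ∈ F, a k * I ^ (q - 1) :=
            Finset.sum_le_sum fun k _ => hterm k
        _ = (∑ k ∈ F, a k) * I ^ (q - 1) := (Finset.sum_mul _ _ _).symm
        _ ≤ I * I ^ (q - 1) := by
            apply mul_le_mul_of_nonneg_right (haF F)
            exact Real.rpow_nonneg hI0 _
        _ = I ^ q := by
            rw [show q = 1 + (q - 1) by ring, Real.rpow_add hIpos, Real.rpow_one]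
            ring_nf
  -- conclusion via HasSum
  have hSum : HasSum (fun k : ℤ => ∫ x in Efam k, |f x - m| ^ q ∂μ)
      (∫ x in Ω ∩ f ⁻¹' Set.Ioi m, |f x - m| ^ q ∂μ) := by
    rw [hEcover]
    exact hasSum_integral_iUnion hEmeas hEdisj
      (hInt.mono_set (by rw [← hEcover]; exact Set.inter_subset_left))
  apply le_of_tendsto hSum
  apply Filter.Eventually.of_forall
  intro F
  calc ∑ k ∈ F, ∫ x in Efam k, |f x - m| ^ q ∂μ
      ≤ ∑ k ∈ F, 2 * C₁ * 16 ^ q * (a k) ^ q := Finset.sum_le_sum fun k _ => perE k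
    _ = 2 * C₁ * 16 ^ q * ∑ k ∈ F, (a k) ^ q := by rw [Finset.mul_sum]
    _ ≤ 2 * C₁ * 16 ^ q * I ^ q := by
        apply mul_le_mul_of_nonneg_left (hsum_rpow F)
        positivity

/-- Truncation / self-improvement principle: if `μ` is a finite measure on `Ω`, `1 ≤ q < ∞`,
`f_φ = ∫_Ω f φ` is a fixed average (`φ ∈ C₀^∞`, `∫_Ω φ = 1`), and the weak-type estimate
`μ{|f - f_φ| > t} t^q ≤ C₁ (∫_Ω |∇f| dν)^q` holds for all locally Lipschitz `f` and `t > 0`,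
then `inf_a (∫_Ω |f - a|^q dμ)^{1/q} ≤ C₂ ∫_Ω |∇f| dν`. -/
theorem truncation_principle {n : ℕ} (Ω : Set (EuclideanSpace ℝ (Fin n))) (hΩo : IsOpen Ω)
    (μ ν : Measure (EuclideanSpace ℝ (Fin n))) [IsFiniteMeasure μ]
    (q : ℝ) (hq : 1 ≤ q)
    (φ : EuclideanSpace ℝ (Fin n) → ℝ) (hφ : ContDiff ℝ (⊤ : ℕ∞) φ)
    (hφc : HasCompactSupport φ) (hφ1 : ∫ x in Ω, φ x = 1)
    (C₁ : ℝ) (hC₁ : 0 < C₁)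
    (hweak : ∀ f : EuclideanSpace ℝ (Fin n) → ℝ, LocallyLipschitzOn Ω f →
      ∀ t : ℝ, 0 < t →
      (μ {x | x ∈ Ω ∧ t < |f x - ∫ z in Ω, f z * φ z|}).toReal * t ^ q
        ≤ C₁ * (∫ x in Ω, ‖fderiv ℝ f x‖ ∂ν) ^ q) :
    ∃ C₂ : ℝ, 0 < C₂ ∧ ∀ f : EuclideanSpace ℝ (Fin n) → ℝ, LocallyLipschitzOn Ω f →
      (⨅ a : ℝ, (∫ x in Ω, |f x - a| ^ q ∂μ) ^ (1 / q))
        ≤ C₂ * ∫ x in Ω, ‖fderiv ℝ f x‖ ∂ν := by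
  have hq0 : (0:ℝ) < q := lt_of_lt_of_le one_pos hq
  have hqne : q ≠ 0 := ne_of_gt hq0
  set C₂ : ℝ := (4 * C₁ * 16 ^ q) ^ (1 / q) + 1 with hC₂def
  have hC₂pos : 0 < C₂ := by
    have h0 : (0:ℝ) ≤ (4 * C₁ * 16 ^ q) ^ (1 / q) :=
      Real.rpow_nonneg (by positivity) _
    rw [hC₂def]
    linarith
  refine ⟨C₂, hC₂pos, ?_⟩
  intro f hf
  set I : ℝ := ∫ x in Ω, ‖fderiv ℝ f x‖ ∂ν with hI
  have hI0 : 0 ≤ I := integral_nonneg fun _ => norm_nonneg _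
  have hRHS0 : 0 ≤ C₂ * I := mul_nonneg hC₂pos.le hI0
  have hfc : ContinuousOn f Ω := hf.continuousOn
  have hbdd : BddBelow (Set.range fun a : ℝ => (∫ x in Ω, |f x - a| ^ q ∂μ) ^ (1 / q)) := by
    refine ⟨0, ?_⟩
    rintro _ ⟨a, rfl⟩
    exact Real.rpow_nonneg
      (integral_nonneg fun x => Real.rpow_nonneg (abs_nonneg _) q) _
  -- it suffices to find one good constant
  suffices h : ∃ m : ℝ, (∫ x in Ω, |f x - m| ^ q ∂μ) ^ (1 / q) ≤ C₂ * I by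
    obtain ⟨m, hm⟩ := h
    exact le_trans (ciInf_le hbdd m) hm
  -- trivial case : μ Ω = 0
  by_cases hμΩ : μ Ω = 0
  · refine ⟨0, ?_⟩
    rw [Measure.restrict_eq_zero.2 hμΩ, integral_zero_measure,
      Real.zero_rpow (one_div_ne_zero hqne)]
    exact hRHS0
  -- case : the gradient is not integrable
  by_cases hIint : IntegrableOn (fun x => ‖fderiv ℝ f x‖) Ω ν
  swap
  · -- then I = 0 and f is a.e. equal to its average
    have hIzero : I = 0 := integral_undef hIint
    set b : ℝ := ∫ z in Ω, f z * φ z with hb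
    refine ⟨b, ?_⟩
    have hS : ∀ t : ℝ, 0 < t → μ {x | x ∈ Ω ∧ t < |f x - b|} = 0 := by
      intro t ht
      have := hweak f hf t ht
      rw [← hI, hIzero, Real.zero_rpow hqne, mul_zero] at this
      have htq : (0:ℝ) < t ^ q := Real.rpow_pos_of_pos ht q
      have h0 : (μ {x | x ∈ Ω ∧ t < |f x - b|}).toReal = 0 := by
        nlinarith [ENNReal.toReal_nonneg (a := μ {x | x ∈ Ω ∧ t < |f x - b|})]
      rcases (ENNReal.toReal_eq_zero_iff _).1 h0 with h | h
      · exact h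
      · exact absurd h (measure_ne_top μ _)
    have hU : μ {x | x ∈ Ω ∧ f x ≠ b} = 0 := by
      have hsub : {x | x ∈ Ω ∧ f x ≠ b} ⊆
          ⋃ n : ℕ, {x | x ∈ Ω ∧ 1 / (n + 1 : ℝ) < |f x - b|} := by
        rintro x ⟨hxΩ, hxb⟩
        have : 0 < |f x - b| := abs_pos.2 (sub_ne_zero.2 hxb)
        obtain ⟨n, hn⟩ := exists_nat_one_div_lt this
        exact Set.mem_iUnion.2 ⟨n, hxΩ, hn⟩
      refine measure_mono_null hsub (measure_iUnion_null fun n => hS _ (by positivity))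
    have hzero : ∫ x in Ω, |f x - b| ^ q ∂μ = 0 := by
      have hae : (fun x => |f x - b| ^ q) =ᵐ[μ.restrict Ω] 0 := by
        rw [Filter.EventuallyEq, ae_restrict_iff' hΩo.measurableSet]
        have hnm : ∀ᵐ x ∂μ, x ∉ {x | x ∈ Ω ∧ f x ≠ b} :=
          (measure_eq_zero_iff_ae_notMem (μ := μ)).1 hU
        filter_upwards [hnm] with x hx hxΩ
        have hfb : f x = b := by
          by_contra hcon
          exact hx ⟨hxΩ, hcon⟩
        simp [hfb, Real.zero_rpow hqne]
      rw [integral_congr_ae hae]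
      simp
    rw [hzero, Real.zero_rpow (one_div_ne_zero hqne)]
    exact hRHS0
  -- main case : get a median
  obtain ⟨m, hmed1, hmed2⟩ := exists_median μ Ω f
    (fun s => (hfc.isOpen_inter_preimage hΩo isOpen_Ioi).measurableSet) hμΩ
  refine ⟨m, ?_⟩
  by_cases hInt : IntegrableOn (fun x => |f x - m| ^ q) Ω μ
  swap
  · rw [integral_undef hInt, Real.zero_rpow (one_div_ne_zero hqne)]
    exact hRHS0
  -- split Ω into sub-median, median and super-median parts
  set P : Set (EuclideanSpace ℝ (Fin n)) := Ω ∩ f ⁻¹' Set.Ioi m with hP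
  set N : Set (EuclideanSpace ℝ (Fin n)) := Ω ∩ f ⁻¹' Set.Iio m with hN
  have hPopen : IsOpen P := hfc.isOpen_inter_preimage hΩo isOpen_Ioi
  have hNopen : IsOpen N := hfc.isOpen_inter_preimage hΩo isOpen_Iio
  set Z : Set (EuclideanSpace ℝ (Fin n)) := Ω \ (P ∪ N) with hZ
  have hZmeas : MeasurableSet Z :=
    hΩo.measurableSet.diff (hPopen.union hNopen).measurableSet
  have hΩsplit : Ω = (P ∪ N) ∪ Z := by
    rw [hZ]
    rw [Set.union_diff_self]
    apply Set.Subset.antisymm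
    · exact Set.subset_union_right
    · apply Set.union_subset _ Set.Subset.rfl
      exact Set.union_subset Set.inter_subset_left Set.inter_subset_left
  have hPNdisj : Disjoint P N := by
    rw [Set.disjoint_left]
    rintro x ⟨_, hx1⟩ ⟨_, hx2⟩
    simp only [Set.mem_preimage, Set.mem_Ioi] at hx1
    simp only [Set.mem_preimage, Set.mem_Iio] at hx2
    linarith
  have hPNZdisj : Disjoint (P ∪ N) Z := Set.disjoint_sdiff_right
  -- the integral over Z vanishes
  have hZzero : ∫ x in Z, |f x - m| ^ q ∂μ = 0 := by
    have : Set.EqOn (fun x => |f x - m| ^ q) (fun _ => (0:ℝ)) Z := by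
      rintro x ⟨hxΩ, hx⟩
      simp only [Set.mem_union, hP, hN, Set.mem_inter_iff, Set.mem_preimage,
        Set.mem_Ioi, Set.mem_Iio, not_or, not_and, not_lt] at hx
      have h1 : f x ≤ m := hx.1 hxΩ
      have h2 : m ≤ f x := hx.2 hxΩ
      have : f x = m := le_antisymm h1 h2
      simp [this, Real.zero_rpow hqne]
    rw [setIntegral_congr_fun hZmeas this]
    simp
  -- positive part bound
  have hbound1 : ∫ x in P, |f x - m| ^ q ∂μ ≤ 2 * C₁ * 16 ^ q * I ^ q := by
    have := half_bound Ω hΩo μ ν q hq φ C₁ hC₁ hweak f hf m hmed1 hIint hInt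
    exact this
  -- negative part bound, by applying half_bound to -f
  have hbound2 : ∫ x in N, |f x - m| ^ q ∂μ ≤ 2 * C₁ * 16 ^ q * I ^ q := by
    have hnf : LocallyLipschitzOn Ω (fun x => -f x) := by
      have hneg : LipschitzWith 1 (fun t : ℝ => -t) :=
        LipschitzWith.of_dist_le_mul fun x y => by
          simp [Real.dist_eq, abs_sub_comm, neg_sub]
      exact hneg.comp_locallyLipschitzOn' hf
    have hIeq : (fun x => ‖fderiv ℝ (fun y => -f y) x‖) = fun x => ‖fderiv ℝ f x‖ := by
      funext x
      rw [fderiv_fun_neg, norm_neg]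
    have hIint' : IntegrableOn (fun x => ‖fderiv ℝ (fun y => -f y) x‖) Ω ν := by
      rw [hIeq]; exact hIint
    have hfeq : (fun x => |(-f x) - (-m)| ^ q) = fun x => |f x - m| ^ q := by
      funext x
      rw [show (-f x) - (-m) = -(f x - m) by ring, abs_neg]
    have hInt' : IntegrableOn (fun x => |(-f x) - (-m)| ^ q) Ω μ := by
      rw [hfeq]; exact hInt
    have hmed' : μ Ω ≤ 2 * μ (Ω ∩ (fun x => -f x) ⁻¹' Set.Iic (-m)) := by
      have hseteq : (fun x => -f x) ⁻¹' Set.Iic (-m) = f ⁻¹' Set.Ici m := by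
        ext x
        simp only [Set.mem_preimage, Set.mem_Iic, Set.mem_Ici, neg_le_neg_iff]
      rw [hseteq]
      exact hmed2
    have := half_bound Ω hΩo μ ν q hq φ C₁ hC₁ hweak (fun x => -f x) hnf (-m)
      hmed' hIint' hInt'
    have hseteq2 : Ω ∩ (fun x => -f x) ⁻¹' Set.Ioi (-m) = N := by
      rw [hN]
      ext x
      simp only [Set.mem_inter_iff, Set.mem_preimage, Set.mem_Ioi, Set.mem_Iio,
        neg_lt_neg_iff]
    rw [hseteq2, hfeq, hIeq] at this
    exact this
  -- total bound
  have htotal : ∫ x in Ω, |f x - m| ^ q ∂μ ≤ 4 * C₁ * 16 ^ q * I ^ q := by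
    have hIntPN : IntegrableOn (fun x => |f x - m| ^ q) (P ∪ N) μ :=
      hInt.mono_set (by rw [hΩsplit]; exact Set.subset_union_left)
    have hIntP : IntegrableOn (fun x => |f x - m| ^ q) P μ :=
      hIntPN.mono_set Set.subset_union_left
    have hIntN : IntegrableOn (fun x => |f x - m| ^ q) N μ :=
      hIntPN.mono_set Set.subset_union_right
    have hIntZ : IntegrableOn (fun x => |f x - m| ^ q) Z μ :=
      hInt.mono_set (by rw [hΩsplit]; exact Set.subset_union_right)
    have hsplit1 : ∫ x in Ω, |f x - m| ^ q ∂μ =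
        (∫ x in P ∪ N, |f x - m| ^ q ∂μ) + ∫ x in Z, |f x - m| ^ q ∂μ := by
      rw [hΩsplit]
      exact setIntegral_union hPNZdisj hZmeas hIntPN hIntZ
    have hsplit2 : ∫ x in P ∪ N, |f x - m| ^ q ∂μ =
        (∫ x in P, |f x - m| ^ q ∂μ) + ∫ x in N, |f x - m| ^ q ∂μ :=
      setIntegral_union hPNdisj hNopen.measurableSet hIntP hIntN
    rw [hsplit1, hsplit2, hZzero]
    linarith
  -- conclude
  have hfin : (∫ x in Ω, |f x - m| ^ q ∂μ) ^ (1 / q) ≤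
      (4 * C₁ * 16 ^ q) ^ (1 / q) * I := by
    have h1 : (∫ x in Ω, |f x - m| ^ q ∂μ) ^ (1 / q) ≤
        (4 * C₁ * 16 ^ q * I ^ q) ^ (1 / q) :=
      Real.rpow_le_rpow
        (integral_nonneg fun x => Real.rpow_nonneg (abs_nonneg _) q) htotal
        (by positivity)
    have h2 : (4 * C₁ * 16 ^ q * I ^ q) ^ (1 / q) =
        (4 * C₁ * 16 ^ q) ^ (1 / q) * I := by
      rw [Real.mul_rpow (by positivity) (Real.rpow_nonneg hI0 q)]
      congr 1
      rw [← Real.rpow_mul hI0, mul_one_div, div_self hqne, Real.rpow_one]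
    rw [h2] at h1
    exact h1
  calc (∫ x in Ω, |f x - m| ^ q ∂μ) ^ (1 / q)
      ≤ (4 * C₁ * 16 ^ q) ^ (1 / q) * I := hfin
    _ ≤ C₂ * I := by
        apply mul_le_mul_of_nonneg_right _ hI0
        rw [hC₂def]
        linarith
end
end
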